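/- arXiv:2501.15241 — 2 statements merged into one kernel-verified Lean document; each statement's English description precedes it below -/
import Mathlib

section
/- For π²/4 < μ < π², the function ψ(t) = sin(2√μ t) - (cos√μ / sin√μ)(1 - cos(2√μ t)) is nonnegative on [0,1]. -/
open Real

theorem stmt_3 (μ : ℝ) (hμ : π ^ 2 / 4 < μ) (hμ' : μ < π ^ 2)
    (ψ : ℝ → ℝ)
    (hψ : ∀ t, ψ t = Real.sin (2 * Real.sqrt μ * t) -
      (Real.cos (Real.sqrt μ) / Real.sin (Real.sqrt μ)) * (1 - Real.cos (2 * Real.sqrt μ * t))) :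
    ∀ t ∈ Set.Icc (0 : ℝ) 1, 0 ≤ ψ t := by
  intro t ht
  obtain ⟨ht0, ht1⟩ := ht
  set s := Real.sqrt μ with hs
  have hπ0 : (0:ℝ) < π := Real.pi_pos
  have hμ0 : (0:ℝ) ≤ μ := le_trans (by positivity) hμ.le
  have hs2 : s < π := by
    have := Real.sqrt_lt_sqrt hμ0 hμ'
    rwa [Real.sqrt_sq hπ0.le] at this
  have hs1 : π / 2 < s := by
    have h : Real.sqrt (π ^ 2 / 4) < s := Real.sqrt_lt_sqrt (by positivity) hμ
    have : Real.sqrt (π ^ 2 / 4) = π / 2 := by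
      rw [show π ^ 2 / 4 = (π / 2) ^ 2 by ring, Real.sqrt_sq (by positivity)]
    linarith
  have hs0 : 0 < s := by linarith
  have hsin : 0 < Real.sin s := Real.sin_pos_of_pos_of_lt_pi hs0 hs2
  set θ := s * t with hθ
  have hθ0 : 0 ≤ θ := mul_nonneg hs0.le ht0
  have hθs : θ ≤ s := by
    calc s * t ≤ s * 1 := by nlinarith
    _ = s := mul_one s
  have key : Real.sin (2 * s * t) - (Real.cos s / Real.sin s) * (1 - Real.cos (2 * s * t)) =
      2 * Real.sin θ * Real.sin (s - θ) / Real.sin s := by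
    have h2 : 2 * s * t = 2 * θ := by rw [hθ]; ring
    rw [h2, Real.sin_two_mul, Real.cos_two_mul, Real.sin_sub]
    field_simp
    linear_combination (2 * Real.cos s) * (Real.sin_sq_add_cos_sq θ)
  rw [hψ, key]
  apply div_nonneg _ hsin.le
  have h1 : 0 ≤ Real.sin θ := Real.sin_nonneg_of_nonneg_of_le_pi hθ0 (by linarith)
  have h2 : 0 ≤ Real.sin (s - θ) :=
    Real.sin_nonneg_of_nonneg_of_le_pi (by linarith) (by linarith)
  positivity
end

section
/- For π²/4 < μ < π², set ψ(t) = sin(2√μ t) - (cos√μ/sin√μ)(1 - cos(2√μ t)). There exists a unique t_μ ∈ (0, 1/2] such that ψ(t_μ) - t_μ·ψ'(t_μ) = 0, with ψ(t) - t·ψ'(t) ≤ 0 on [0, t_μ] and ψ(t) - t·ψ'(t) ≥ 0 on [t_μ, 1]. -/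
/-!
With `θ = √μ ∈ (π/2, π)` one has `ψ t = (cos (θ (2t - 1)) - cos θ) / sin θ`. The tangent
intercept `g t = ψ t - t ψ' t` satisfies `g 0 = 0` and
`g' t = -t ψ'' t = 4 θ² t cos (θ (2t - 1)) / sin θ`, so `g` strictly decreases on `[0, a]` and
strictly increases on `[a, 1/2]`, where `θ (1 - 2a) = π/2`. On `[1/2, 1]` the angle `θ (2t - 1)`
lies in `[0, θ] ⊆ [0, π]`, which makes every term of
`g t · sin θ = cos (θ (2t - 1)) - cos θ + 2θt sin (θ (2t - 1))` nonnegative. Hence `g` has exactly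
one zero in `(0, 1/2]`, lying in `(a, 1/2]`, with the stated signs.
-/

open Real Set

noncomputable section

def tangentIntercept (f : ℝ → ℝ) (t : ℝ) : ℝ := f t - t * deriv f t

theorem hasDerivAt_tangentIntercept {f f' : ℝ → ℝ} {f'' t : ℝ}
    (hf : ∀ x, HasDerivAt f (f' x) x) (hf' : HasDerivAt f' f'' t) :
    HasDerivAt (tangentIntercept f) (-(t * f'')) t := by
  have hderiv : deriv f = f' := funext fun x => (hf x).deriv
  unfold tangentIntercept
  rw [hderiv]
  exact ((hf t).sub ((hasDerivAt_id' t).mul hf')).congr_deriv (by ring)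

theorem exists_zero_of_strictAntiOn_of_strictMonoOn {g : ℝ → ℝ} {x₀ a m : ℝ}
    (hx₀a : x₀ < a) (ham : a ≤ m) (hanti : StrictAntiOn g (Icc x₀ a))
    (hmono : StrictMonoOn g (Icc a m)) (hcont : ContinuousOn g (Icc a m))
    (h₀ : g x₀ = 0) (hm : 0 ≤ g m) :
    ∃ z ∈ Ioc a m, g z = 0 ∧ (∀ t ∈ Icc x₀ z, g t ≤ 0) ∧ (∀ t ∈ Icc z m, 0 ≤ g t) ∧
      ∀ s ∈ Ioc x₀ m, g s = 0 → s = z := by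
  have hlt : ∀ t ∈ Ioc x₀ a, g t < 0 := fun t ht =>
    h₀ ▸ hanti ⟨le_rfl, hx₀a.le⟩ ⟨ht.1.le, ht.2⟩ ht.1
  obtain ⟨z, hz, hgz⟩ := intermediate_value_Icc ham hcont
    ⟨(hlt a ⟨hx₀a, le_rfl⟩).le, hm⟩
  have haz : a < z := hz.1.lt_of_ne (by rintro rfl; exact (hlt a ⟨hx₀a, le_rfl⟩).ne hgz)
  refine ⟨z, ⟨haz, hz.2⟩, hgz, fun t ht => ?_, fun t ht => ?_, fun s hs hgs => ?_⟩
  · rcases le_or_gt t a with hta | hta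
    · rcases ht.1.eq_or_lt with rfl | hx₀t
      · exact h₀.le
      · exact (hlt t ⟨hx₀t, hta⟩).le
    · exact hgz ▸ hmono.monotoneOn ⟨hta.le, ht.2.trans hz.2⟩ hz ht.2
  · exact hgz ▸ hmono.monotoneOn hz ⟨haz.le.trans ht.1, ht.2⟩ ht.1
  · rcases le_or_gt s a with hsa | hsa
    · exact absurd hgs (hlt s ⟨hs.1, hsa⟩).ne
    · exact hmono.injOn ⟨hsa.le, hs.2⟩ hz (hgs.trans hgz.symm)

def psi (θ t : ℝ) : ℝ := (cos (θ * (2 * t - 1)) - cos θ) / sin θ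

theorem sin_sub_cot_mul_eq_psi {θ : ℝ} (hθ : sin θ ≠ 0) (t : ℝ) :
    sin (2 * θ * t) - cos θ / sin θ * (1 - cos (2 * θ * t)) = psi θ t := by
  rw [psi, show θ * (2 * t - 1) = 2 * θ * t - θ by ring, cos_sub]
  field_simp
  ring

theorem hasDerivAt_mul_two_mul_sub_one (θ t : ℝ) :
    HasDerivAt (fun t => θ * (2 * t - 1)) (2 * θ) t :=
  (((hasDerivAt_id' t).const_mul 2).sub_const 1).const_mul θ |>.congr_deriv (by ring)

theorem hasDerivAt_psi (θ t : ℝ) :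
    HasDerivAt (psi θ) (-(2 * θ * sin (θ * (2 * t - 1))) / sin θ) t :=
  (((hasDerivAt_mul_two_mul_sub_one θ t).cos.sub_const (cos θ)).div_const (sin θ)).congr_deriv
    (by ring)

theorem hasDerivAt_deriv_psi (θ t : ℝ) :
    HasDerivAt (fun t => -(2 * θ * sin (θ * (2 * t - 1))) / sin θ)
      (-(4 * θ ^ 2 * cos (θ * (2 * t - 1))) / sin θ) t :=
  ((((hasDerivAt_mul_two_mul_sub_one θ t).sin.const_mul (2 * θ)).neg).div_const
    (sin θ)).congr_deriv (by ring)

theorem hasDerivAt_tangentIntercept_psi (θ t : ℝ) :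
    HasDerivAt (tangentIntercept (psi θ)) (4 * θ ^ 2 * t * cos (θ * (2 * t - 1)) / sin θ) t :=
  (hasDerivAt_tangentIntercept (hasDerivAt_psi θ) (hasDerivAt_deriv_psi θ t)).congr_deriv
    (by ring)

theorem continuous_tangentIntercept_psi (θ : ℝ) : Continuous (tangentIntercept (psi θ)) :=
  continuous_iff_continuousAt.2 fun t => (hasDerivAt_tangentIntercept_psi θ t).continuousAt

theorem tangentIntercept_psi (θ t : ℝ) :
    tangentIntercept (psi θ) t =
      (cos (θ * (2 * t - 1)) - cos θ + 2 * θ * t * sin (θ * (2 * t - 1))) / sin θ := by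
  rw [tangentIntercept, (hasDerivAt_psi θ t).deriv, psi]
  ring

theorem tangentIntercept_psi_zero (θ : ℝ) : tangentIntercept (psi θ) 0 = 0 := by
  simp [tangentIntercept_psi]

theorem tangentIntercept_psi_nonneg {θ t : ℝ} (hθ₀ : 0 < θ) (hθπ : θ < π)
    (ht : t ∈ Icc (1 / 2) 1) : 0 ≤ tangentIntercept (psi θ) t := by
  have hx₀ : 0 ≤ θ * (2 * t - 1) := mul_nonneg hθ₀.le (by linarith [ht.1])
  have hxθ : θ * (2 * t - 1) ≤ θ := by nlinarith [ht.2]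
  rw [tangentIntercept_psi]
  refine div_nonneg (add_nonneg ?_ ?_) (sin_pos_of_pos_of_lt_pi hθ₀ hθπ).le
  · exact sub_nonneg.2 (cos_le_cos_of_nonneg_of_le_pi hx₀ hθπ.le hxθ)
  · exact mul_nonneg (by nlinarith [ht.1]) (sin_nonneg_of_nonneg_of_le_pi hx₀ (by linarith))

theorem strictAntiOn_tangentIntercept_psi {θ : ℝ} (hθ₀ : 0 < θ) (hθπ : θ < π) :
    StrictAntiOn (tangentIntercept (psi θ)) (Icc 0 (1 / 2 - π / (4 * θ))) := by
  refine strictAntiOn_of_deriv_neg (convex_Icc _ _)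
    (continuous_tangentIntercept_psi θ).continuousOn fun t ht => ?_
  rw [interior_Icc] at ht
  have hangle : θ * (1 - 2 * t) - π / 2 = 2 * θ * (1 / 2 - π / (4 * θ) - t) := by
    field_simp
    ring
  have hcos : cos (θ * (2 * t - 1)) < 0 := by
    rw [show θ * (2 * t - 1) = -(θ * (1 - 2 * t)) by ring, cos_neg]
    refine cos_neg_of_pi_div_two_lt_of_lt ?_ (by nlinarith [ht.1])
    nlinarith [mul_pos hθ₀ (sub_pos.2 ht.2)]
  rw [(hasDerivAt_tangentIntercept_psi θ t).deriv]
  exact div_neg_of_neg_of_pos (mul_neg_of_pos_of_neg (by have := ht.1; positivity) hcos)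
    (sin_pos_of_pos_of_lt_pi hθ₀ hθπ)

theorem strictMonoOn_tangentIntercept_psi {θ : ℝ} (hθ₁ : π / 2 < θ) (hθπ : θ < π) :
    StrictMonoOn (tangentIntercept (psi θ)) (Icc (1 / 2 - π / (4 * θ)) (1 / 2)) := by
  have hθ₀ : 0 < θ := by linarith [pi_pos]
  refine strictMonoOn_of_deriv_pos (convex_Icc _ _)
    (continuous_tangentIntercept_psi θ).continuousOn fun t ht => ?_
  rw [interior_Icc] at ht
  have hangle : θ * (2 * t - 1) + π / 2 = 2 * θ * (t - (1 / 2 - π / (4 * θ))) := by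
    field_simp
    ring
  have ht₀ : 0 < t := by
    have : π / (4 * θ) < 1 / 2 := by rw [div_lt_iff₀ (by positivity)]; linarith
    linarith [ht.1]
  have hcos : 0 < cos (θ * (2 * t - 1)) := by
    refine cos_pos_of_mem_Ioo ⟨?_, by nlinarith [ht.2, pi_pos]⟩
    nlinarith [mul_pos hθ₀ (sub_pos.2 ht.1)]
  rw [(hasDerivAt_tangentIntercept_psi θ t).deriv]
  exact div_pos (by positivity) (sin_pos_of_pos_of_lt_pi hθ₀ hθπ)

end

theorem stmt_14 (μ : ℝ) (hμ : π ^ 2 / 4 < μ) (hμ' : μ < π ^ 2)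
    (ψ : ℝ → ℝ)
    (hψ : ∀ t, ψ t = Real.sin (2 * Real.sqrt μ * t) -
      (Real.cos (Real.sqrt μ) / Real.sin (Real.sqrt μ)) * (1 - Real.cos (2 * Real.sqrt μ * t))) :
    ∃ tμ ∈ Set.Ioc (0 : ℝ) (1 / 2),
      ψ tμ - tμ * deriv ψ tμ = 0 ∧
      (∀ t ∈ Set.Icc (0 : ℝ) tμ, ψ t - t * deriv ψ t ≤ 0) ∧
      (∀ t ∈ Set.Icc tμ (1 : ℝ), 0 ≤ ψ t - t * deriv ψ t) ∧
      (∀ s ∈ Set.Ioc (0 : ℝ) (1 / 2), ψ s - s * deriv ψ s = 0 → s = tμ) := by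
  set θ := √μ
  have hθ₁ : π / 2 < θ := by
    rw [← sqrt_sq (by positivity : 0 ≤ π / 2)]
    exact sqrt_lt_sqrt (by positivity) (by linarith)
  have hθπ : θ < π := by
    rw [← sqrt_sq pi_pos.le]
    exact sqrt_lt_sqrt (by linarith [sq_nonneg π]) hμ'
  have hθ₀ : 0 < θ := by linarith [pi_pos]
  obtain rfl : ψ = psi θ := funext fun t =>
    (hψ t).trans (sin_sub_cot_mul_eq_psi (sin_pos_of_pos_of_lt_pi hθ₀ hθπ).ne' t)
  have ha₀ : 0 < 1 / 2 - π / (4 * θ) := by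
    rw [sub_pos, div_lt_iff₀ (by positivity)]
    linarith
  obtain ⟨z, hz, hgz, hneg, hpos, huniq⟩ := exists_zero_of_strictAntiOn_of_strictMonoOn ha₀
    (by linarith [div_pos pi_pos (by positivity : 0 < 4 * θ)])
    (strictAntiOn_tangentIntercept_psi hθ₀ hθπ) (strictMonoOn_tangentIntercept_psi hθ₁ hθπ)
    (continuous_tangentIntercept_psi θ).continuousOn (tangentIntercept_psi_zero θ)
    (tangentIntercept_psi_nonneg hθ₀ hθπ ⟨le_rfl, by norm_num⟩)
  refine ⟨z, ⟨ha₀.trans hz.1, hz.2⟩, hgz, hneg, fun t ht => ?_, huniq⟩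
  rcases le_total t (1 / 2) with ht₂ | ht₂
  · exact hpos t ⟨ht.1, ht₂⟩
  · exact tangentIntercept_psi_nonneg hθ₀ hθπ ⟨ht₂, ht.2⟩
end
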